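/- Let G be a finite simple graph with n vertices and m edges. Then the coefficient of x^{n−3} in the Laplacian matching polynomial LM_G(x) equals −(E_3 − m·E_1 + A_2), where E_r is the r-th elementary symmetric polynomial of the degree sequence of G and A_2 = Σ_{v∈V(G)} d_G(v)². -/

import Mathlib

open Polynomial Finset

namespace LMRIV

open scoped Classical

variable {V : Type*}

/-- The degree of a vertex. -/
noncomputable def deg [Fintype V] (G : SimpleGraph V) (v : V) : ℕ :=
  (univ.filter fun w => G.Adj v w).card

/-- The finset of edges of `G`. -/
noncomputable def edges [Fintype V] (G : SimpleGraph V) : Finset (Sym2 V) :=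
  univ.filter fun e => e ∈ G.edgeSet

/-- A matching: a set of pairwise disjoint edges. -/
def IsMatching (G : SimpleGraph V) (M : Finset (Sym2 V)) : Prop :=
  (↑M : Set (Sym2 V)) ⊆ G.edgeSet ∧
    ∀ e ∈ M, ∀ f ∈ M, e ≠ f → ∀ x : V, x ∈ e → x ∉ f

/-- The finset of all matchings of `G` (including the empty matching). -/
noncomputable def matchings [Fintype V] (G : SimpleGraph V) : Finset (Finset (Sym2 V)) :=
  univ.filter fun M => IsMatching G M

/-- The set of vertices covered by a matching. -/
noncomputable def covered [Fintype V] (M : Finset (Sym2 V)) : Finset V :=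
  univ.filter fun x => ∃ e ∈ M, x ∈ e

/-- The Laplacian matching polynomial of `G`, with coefficients in `R`. -/
noncomputable def LM (R : Type*) [CommRing R] [Fintype V] (G : SimpleGraph V) :
    Polynomial R :=
  ∑ M ∈ matchings G, (-1 : Polynomial R) ^ M.card *
    ∏ v ∈ univ \ covered M, (X - C (deg G v : R))

/-- `p_r(G)`: the sum of the `r`-th powers of the complex roots of `LM_G`. -/
noncomputable def psum [Fintype V] (G : SimpleGraph V) (r : ℕ) : ℂ :=
  (((LM ℂ G).roots).map (· ^ r)).sum

/-- `A_r(G) = Σ_v d_G(v)^r`. -/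
noncomputable def A [Fintype V] (G : SimpleGraph V) (r : ℕ) : ℕ :=
  ∑ v : V, (deg G v) ^ r

/-- `B(G) = Σ_{xy ∈ E(G)} d_G(x) d_G(y)`. -/
noncomputable def B [Fintype V] (G : SimpleGraph V) : ℕ :=
  ∑ e ∈ edges G, Sym2.lift ⟨fun x y => deg G x * deg G y, fun x y => mul_comm _ _⟩ e

/-- `C(G) = Σ_{xy ∈ E(G)} (d_G(x)^2 d_G(y) + d_G(x) d_G(y)^2)`. -/
noncomputable def Csum [Fintype V] (G : SimpleGraph V) : ℕ :=
  ∑ e ∈ edges G,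
    Sym2.lift ⟨fun x y => deg G x ^ 2 * deg G y + deg G x * deg G y ^ 2,
      fun x y => by ring⟩ e

/-- The graph obtained from `G` by adding the edge `uv`. -/
def addEdge (G : SimpleGraph V) (u v : V) : SimpleGraph V :=
  G ⊔ SimpleGraph.fromEdgeSet {s(u, v)}

/-- `S_w = Σ_{x ∈ N_G(w)} d_G(x)`. -/
noncomputable def Ssum [Fintype V] (G : SimpleGraph V) (w : V) : ℕ :=
  ∑ x ∈ univ.filter fun x => G.Adj w x, deg G x

/-- `T_w = Σ_{x ∈ N_G(w)} d_G(x)^2`. -/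
noncomputable def Tsum [Fintype V] (G : SimpleGraph V) (w : V) : ℕ :=
  ∑ x ∈ univ.filter fun x => G.Adj w x, (deg G x) ^ 2

/-- The `r`-th elementary symmetric polynomial of the degree sequence of `G`. -/
noncomputable def esymmDeg [Fintype V] (G : SimpleGraph V) (r : ℕ) : ℕ :=
  ∑ s ∈ univ.powersetCard r, ∏ v ∈ s, deg G v

/-- `φ_2(G)`: the number of 2-matchings of `G`. -/
noncomputable def phi2 [Fintype V] (G : SimpleGraph V) : ℕ :=
  ((matchings G).filter fun M => M.card = 2).card


section Aux
variable [Fintype V] (G : SimpleGraph V)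

lemma mem_matchings {M : Finset (Sym2 V)} : M ∈ matchings G ↔ IsMatching G M := by
  simp [matchings]

lemma mem_edges {e : Sym2 V} : e ∈ edges G ↔ e ∈ G.edgeSet := by
  simp [edges]

lemma deg_eq_degree (v : V) : deg G v = G.degree v := by
  rw [deg, SimpleGraph.degree]
  congr 1
  ext w
  simp [SimpleGraph.mem_neighborFinset]

set_option linter.unusedSectionVars false in
lemma coeff_prod_X_sub_C (s : Finset V) (f : V → ℂ) {k : ℕ} (h : k ≤ s.card) :
    (∏ v ∈ s, (X - C (f v))).coeff k =
      (-1) ^ (s.card - k) * ∑ t ∈ s.powersetCard (s.card - k), ∏ v ∈ t, f v := by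
  have h' : k ≤ Multiset.card (s.val.map f) := by simpa using h
  have key := Multiset.prod_X_sub_C_coeff (s.val.map f) h'
  rw [Multiset.map_map, Multiset.card_map] at key
  rw [Finset.prod]
  rw [show (s.val.map fun v => X - C (f v)) = s.val.map ((fun t => X - C t) ∘ f) from rfl]
  rw [key, Finset.esymm_map_val]
  rfl

lemma covered_empty : covered (∅ : Finset (Sym2 V)) = ∅ := by simp [covered]

lemma covered_singleton (e : Sym2 V) :
    covered ({e} : Finset (Sym2 V)) = univ.filter (· ∈ e) := by
  simp [covered]

lemma card_filter_mem_sym2 {e : Sym2 V} (he : ¬ e.IsDiag) :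
    (univ.filter (· ∈ e) : Finset V).card = 2 := by
  induction e with
  | _ u v =>
    rw [Sym2.mk_isDiag_iff] at he
    have h2 : (univ.filter (· ∈ s(u, v)) : Finset V) = {u, v} := by
      ext x; simp [Sym2.mem_iff]
    rw [h2, card_insert_of_notMem (by simp [he]), card_singleton]

lemma card_covered {M : Finset (Sym2 V)} (hM : IsMatching G M) :
    (covered M).card = 2 * M.card := by
  have hcov : covered M = M.biUnion (fun e => univ.filter (· ∈ e)) := by
    ext x; simp [covered]
  rw [hcov, card_biUnion]
  · rw [Finset.sum_congr rfl
      (fun e he => card_filter_mem_sym2 (G.not_isDiag_of_mem_edgeSet (hM.1 he))),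
      sum_const, smul_eq_mul, mul_comm]
  · intro e he f hf hef
    rw [Function.onFun, Finset.disjoint_left]
    intro x hx hx'
    exact hM.2 e he f hf hef x (by simpa using hx) (by simpa using hx')

lemma natDegree_prodterm (s : Finset V) :
    (∏ v ∈ s, (X - C ((deg G v : ℂ)))).natDegree = s.card := by
  rw [natDegree_prod_of_monic _ _ (fun v _ => monic_X_sub_C _)]
  simp only [natDegree_X_sub_C, sum_const, smul_eq_mul, mul_one]

lemma card_filter_edges (w : V) :
    ((edges G).filter fun e => w ∈ e).card = deg G w := by
  have h : (edges G).filter (fun e => w ∈ e) = G.incidenceFinset w := by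
    rw [SimpleGraph.incidenceFinset_eq_filter]
    congr 1
    ext e; simp [edges, SimpleGraph.mem_edgeFinset]
  rw [h, SimpleGraph.card_incidenceFinset_eq_degree, deg_eq_degree]

lemma esymmDeg_one : esymmDeg G 1 = ∑ v : V, deg G v := by
  rw [esymmDeg, powersetCard_one, sum_map]
  simp

set_option linter.unusedSectionVars false in
lemma singleton_matching {e : Sym2 V} (he : e ∈ G.edgeSet) :
    IsMatching G ({e} : Finset (Sym2 V)) := by
  constructor
  · intro f hf
    simp only [coe_singleton, Set.mem_singleton_iff] at hf
    subst hf; exact he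
  · intro a ha b hb hab
    simp only [mem_singleton] at ha hb
    subst ha; subst hb; exact absurd rfl hab

end Aux


/-- The coefficient of `x^(n-3)` in `LM_G` equals `-(E_3 - m E_1 + A_2)`. -/
theorem coeff_three [Fintype V] (G : SimpleGraph V) (hn : 3 ≤ Fintype.card V) :
    (LM ℂ G).coeff (Fintype.card V - 3) =
      -((esymmDeg G 3 : ℂ) - ((edges G).card : ℂ) * (esymmDeg G 1 : ℂ) + (A G 2 : ℂ)) := by
  classical
  rw [LM, finset_sum_coeff]
  have hterm : ∀ M ∈ matchings G,
      ((-1 : ℂ[X]) ^ M.card * ∏ v ∈ univ \ covered M, (X - C ((deg G v : ℂ)))).coeff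
        (Fintype.card V - 3) =
      (-1 : ℂ) ^ M.card * (∏ v ∈ univ \ covered M, (X - C ((deg G v : ℂ)))).coeff
        (Fintype.card V - 3) := by
    intro M _
    rw [show ((-1 : ℂ[X]) ^ M.card) = C ((-1 : ℂ) ^ M.card) by simp, coeff_C_mul]
  rw [Finset.sum_congr rfl hterm]
  rw [← Finset.sum_filter_add_sum_filter_not (matchings G) (fun M => M.card = 0)]
  rw [← Finset.sum_filter_add_sum_filter_not
      ((matchings G).filter fun M => ¬ M.card = 0) (fun M => M.card = 1)]
  have hzero : ∑ M ∈ ((matchings G).filter fun M => ¬M.card = 0).filter fun M => ¬M.card = 1,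
      (-1 : ℂ) ^ M.card * (∏ v ∈ univ \ covered M, (X - C ((deg G v : ℂ)))).coeff
        (Fintype.card V - 3) = 0 := by
    apply Finset.sum_eq_zero
    intro M hM
    simp only [mem_filter] at hM
    obtain ⟨⟨hMm, h0⟩, h1⟩ := hM
    have hmat := (mem_matchings G).mp hMm
    have hc : 2 ≤ M.card := by omega
    have hcov := card_covered G hmat
    have hle : (covered M).card ≤ Fintype.card V := by
      simpa using card_le_card (subset_univ (covered M))
    have hdeg : (∏ v ∈ univ \ covered M, (X - C ((deg G v : ℂ)))).natDegree =
        Fintype.card V - 2 * M.card := by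
      rw [natDegree_prodterm, card_sdiff_of_subset (subset_univ _), card_univ, hcov]
    rw [coeff_eq_zero_of_natDegree_lt (by rw [hdeg]; omega), mul_zero]
  rw [hzero, add_zero]
  have h0set : (matchings G).filter (fun M => M.card = 0) = {(∅ : Finset (Sym2 V))} := by
    ext M
    simp only [mem_filter, mem_singleton, card_eq_zero]
    constructor
    · rintro ⟨-, h⟩; exact h
    · rintro rfl
      exact ⟨(mem_matchings G).mpr ⟨by simp, by simp⟩, rfl⟩
  have h1set : ((matchings G).filter fun M => ¬M.card = 0).filter (fun M => M.card = 1) =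
      (edges G).image fun e => ({e} : Finset (Sym2 V)) := by
    ext M
    simp only [mem_filter, mem_image]
    constructor
    · rintro ⟨⟨hMm, -⟩, hc⟩
      obtain ⟨e, rfl⟩ := card_eq_one.mp hc
      refine ⟨e, ?_, rfl⟩
      have := ((mem_matchings G).mp hMm).1
        (by simp : e ∈ (({e} : Finset (Sym2 V)) : Set (Sym2 V)))
      exact (mem_edges G).mpr this
    · rintro ⟨e, he, rfl⟩
      exact ⟨⟨(mem_matchings G).mpr (singleton_matching G ((mem_edges G).mp he)), by simp⟩,
        by simp⟩
  rw [h0set, h1set, sum_singleton,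
    Finset.sum_image (fun a _ b _ h => Finset.singleton_injective h)]
  have e0 : (-1 : ℂ) ^ (∅ : Finset (Sym2 V)).card *
      (∏ v ∈ univ \ covered (∅ : Finset (Sym2 V)), (X - C ((deg G v : ℂ)))).coeff
        (Fintype.card V - 3) = -(esymmDeg G 3 : ℂ) := by
    rw [covered_empty, sdiff_empty, card_empty, pow_zero, one_mul]
    rw [coeff_prod_X_sub_C _ _ (by rw [card_univ]; omega), card_univ,
      show Fintype.card V - (Fintype.card V - 3) = 3 by omega]
    push_cast [esymmDeg]
    ring
  have e1 : ∀ e ∈ edges G,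
      (-1 : ℂ) ^ ({e} : Finset (Sym2 V)).card *
        (∏ v ∈ univ \ covered ({e} : Finset (Sym2 V)), (X - C ((deg G v : ℂ)))).coeff
          (Fintype.card V - 3) =
      (∑ v : V, (deg G v : ℂ)) - ∑ w ∈ covered ({e} : Finset (Sym2 V)), (deg G w : ℂ) := by
    intro e he
    have hmat := singleton_matching G ((mem_edges G).mp he)
    have hcov2 : (covered ({e} : Finset (Sym2 V))).card = 2 := by
      rw [card_covered G hmat]; simp
    have hcard : (univ \ covered ({e} : Finset (Sym2 V))).card = Fintype.card V - 2 := by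
      rw [card_sdiff_of_subset (subset_univ _), card_univ, hcov2]
    rw [coeff_prod_X_sub_C _ _ (by rw [hcard]; omega), hcard,
      show Fintype.card V - 2 - (Fintype.card V - 3) = 1 by omega]
    rw [powersetCard_one, sum_map, card_singleton, pow_one]
    simp only [Function.Embedding.coeFn_mk, prod_singleton]
    rw [Finset.sum_sdiff_eq_sub (subset_univ _)]
    ring
  rw [Finset.sum_congr rfl e1, Finset.sum_sub_distrib, sum_const]
  have hdd : ∑ e ∈ edges G, ∑ w ∈ covered ({e} : Finset (Sym2 V)), ((deg G w : ℂ)) =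
      ∑ w : V, (deg G w : ℂ) ^ 2 := by
    have hstep : ∀ e ∈ edges G,
        ∑ w ∈ covered ({e} : Finset (Sym2 V)), ((deg G w : ℂ)) =
        ∑ w : V, if w ∈ e then (deg G w : ℂ) else 0 := by
      intro e _
      rw [covered_singleton, sum_filter]
    rw [Finset.sum_congr rfl hstep, Finset.sum_comm]
    refine Finset.sum_congr rfl fun w _ => ?_
    rw [← sum_filter, sum_const, card_filter_edges, nsmul_eq_mul, sq]
  rw [hdd, e0, nsmul_eq_mul, esymmDeg_one]
  push_cast [A]
  ring

end LMRIV
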